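/- arXiv:1606.06388 — 2 statements merged into one kernel-verified Lean document; each statement's English description precedes it below -/
import Mathlib

section
/- For every real β > −1, every integer k ≥ 1, and every ζ ∈ ℝ: J_k^{−1,β}(ζ) = ((k+β)/(2k+β)) · ( J_k^{0,β}(ζ) − J_{k−1}^{0,β}(ζ) ). -/
open Real MeasureTheory

/-- Generalized binomial coefficient `C(x,k) = x(x-1)⋯(x-k+1)/k!`. -/
noncomputable def genBinom (x : ℝ) (k : ℕ) : ℝ :=
  (descPochhammer ℝ k).eval x / (Nat.factorial k : ℝ)

/-- Generalized Jacobi polynomial `J_n^{α,β}(ζ)`. -/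
noncomputable def genJacobi (α β : ℝ) (n : ℕ) (ζ : ℝ) : ℝ :=
  ∑ m ∈ Finset.range (n + 1),
    genBinom ((n : ℝ) + α) (n - m) * genBinom ((n : ℝ) + β) m *
      ((ζ - 1) / 2) ^ m * ((ζ + 1) / 2) ^ (n - m)

/-!
With `x = (ζ - 1) / 2` and `y = (ζ + 1) / 2`, `J_n^{α,β}` is a binary form of degree `n` whose
coefficient at `x^m y^i` is `C(n+α, i) C(n+β, m)`, and `y - x = 1`. Multiplying `J_{n-1}` by
`x - y = -1` turns the contiguous relation
  `(2n+α+β) J_n^{α-1,β} = (n+α+β) J_n^{α,β} - (n+β) J_{n-1}^{α,β}`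
into an identity between forms of degree `n`, checked coefficientwise after splitting
`2n+α+β = m + (2n+α+β-m)`: the first part is `(n+β) x J_{n-1}` by absorption in the
β-binomial, the second is `-(n+β) y J_{n-1}` by Pascal's rule and absorption in the α-binomial.
The theorem is the case `α = 0`, where `2n+β > 0`.
-/

open Finset

theorem genBinom_eq_choose (x : ℝ) (k : ℕ) : genBinom x k = Ring.choose x k := by
  rw [Ring.choose_eq_smul, Polynomial.descPochhammer_smeval_eq_ascPochhammer,
    Polynomial.ascPochhammer_smeval_eq_eval, genBinom, descPochhammer_eval_eq_ascPochhammer,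
    smul_eq_mul, div_eq_inv_mul]

namespace Ring

variable {R : Type*} [CommRing R] [BinomialRing R]

theorem choose_succ_right_eq (r : R) (k : ℕ) :
    choose r (k + 1) * (k + 1) = choose r k * (r - k) := by
  have h := choose_smul_choose r (Nat.le_add_right k 1)
  rwa [Nat.choose_succ_self_right, Nat.add_sub_cancel_left, choose_one_right, nsmul_eq_mul,
    Nat.cast_succ, mul_comm] at h

theorem succ_mul_choose_eq (r : R) (k : ℕ) :
    (r + 1) * choose r k = choose (r + 1) (k + 1) * (k + 1) := by
  linear_combination -choose_succ_right_eq r k - (k + 1) * choose_succ_succ r k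

theorem choose_mul_succ_eq (r : R) (k : ℕ) :
    choose r k * (r + 1) = choose (r + 1) k * (r + 1 - k) := by
  linear_combination succ_mul_choose_eq r k + choose_succ_right_eq (r + 1) k

end Ring

def binaryForm (n : ℕ) (c : ℕ → ℕ → ℝ) (x y : ℝ) : ℝ :=
  ∑ p ∈ antidiagonal n, c p.1 p.2 * x ^ p.1 * y ^ p.2

theorem binaryForm_succ_left (n : ℕ) (c : ℕ → ℕ → ℝ) (x y : ℝ) :
    binaryForm (n + 1) c x y
      = c 0 (n + 1) * y ^ (n + 1) + x * binaryForm n (fun m i => c (m + 1) i) x y := by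
  rw [binaryForm, Nat.sum_antidiagonal_succ, binaryForm, mul_sum]
  simp only [pow_zero, mul_one, pow_succ]
  congr 1
  exact sum_congr rfl fun _ _ => by ring

theorem binaryForm_succ_right (n : ℕ) (c : ℕ → ℕ → ℝ) (x y : ℝ) :
    binaryForm (n + 1) c x y
      = c (n + 1) 0 * x ^ (n + 1) + y * binaryForm n (fun m i => c m (i + 1)) x y := by
  rw [binaryForm, Nat.sum_antidiagonal_succ', binaryForm, mul_sum]
  simp only [pow_zero, mul_one, pow_succ]
  congr 1
  exact sum_congr rfl fun _ _ => by ring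

theorem binaryForm_add (n : ℕ) (c d : ℕ → ℕ → ℝ) (x y : ℝ) :
    binaryForm n (fun m i => c m i + d m i) x y = binaryForm n c x y + binaryForm n d x y := by
  simp only [binaryForm, add_mul, sum_add_distrib]

theorem binaryForm_const_mul (n : ℕ) (a : ℝ) (c : ℕ → ℕ → ℝ) (x y : ℝ) :
    binaryForm n (fun m i => a * c m i) x y = a * binaryForm n c x y := by
  simp only [binaryForm, mul_sum, mul_assoc]

theorem binaryForm_congr {n : ℕ} {c d : ℕ → ℕ → ℝ} (h : ∀ m i, m + i = n → c m i = d m i)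
    (x y : ℝ) : binaryForm n c x y = binaryForm n d x y :=
  sum_congr rfl fun p hp => by rw [h p.1 p.2 (mem_antidiagonal.mp hp)]

noncomputable def jacobiCoeff (α β : ℝ) (n m i : ℕ) : ℝ :=
  Ring.choose (n + α) i * Ring.choose (n + β) m

theorem genJacobi_eq_binaryForm (α β : ℝ) (n : ℕ) (ζ : ℝ) :
    genJacobi α β n ζ = binaryForm n (jacobiCoeff α β n) ((ζ - 1) / 2) ((ζ + 1) / 2) := by
  rw [binaryForm, Nat.sum_antidiagonal_eq_sum_range_succ
    (fun m i => jacobiCoeff α β n m i * ((ζ - 1) / 2) ^ m * ((ζ + 1) / 2) ^ i)]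
  simp only [genJacobi, jacobiCoeff, genBinom_eq_choose]

theorem binaryForm_natCast_mul_jacobiCoeff (α β : ℝ) (n : ℕ) (x y : ℝ) :
    binaryForm (n + 1) (fun m i => m * jacobiCoeff (α - 1) β (n + 1) m i) x y
      = (n + 1 + β) * x * binaryForm n (jacobiCoeff α β n) x y := by
  have hshift :
      binaryForm n (fun m i => (m + 1 : ℕ) * jacobiCoeff (α - 1) β (n + 1) (m + 1) i) x y
      = (n + 1 + β) * binaryForm n (jacobiCoeff α β n) x y := by
    rw [← binaryForm_const_mul]
    refine binaryForm_congr (fun m i _ => ?_) x y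
    have h := Ring.succ_mul_choose_eq ((n : ℝ) + β) m
    simp only [jacobiCoeff]
    push_cast
    rw [show (n : ℝ) + 1 + (α - 1) = n + α by ring, add_right_comm]
    linear_combination (-Ring.choose ((n : ℝ) + α) i) * h
  rw [binaryForm_succ_left, hshift, Nat.cast_zero, zero_mul, zero_mul, zero_add]
  ring

theorem binaryForm_jacobiCoeff_sub (α β : ℝ) (n : ℕ) (x y : ℝ) :
    binaryForm (n + 1) (fun m i => (2 * (n + 1) + α + β - m) * jacobiCoeff (α - 1) β (n + 1) m i
        - (n + 1 + α + β) * jacobiCoeff α β (n + 1) m i) x y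
      = -(n + 1 + β) * y * binaryForm n (jacobiCoeff α β n) x y := by
  have hshift : binaryForm n (fun m i =>
        (2 * (n + 1) + α + β - m) * jacobiCoeff (α - 1) β (n + 1) m (i + 1)
          - (n + 1 + α + β) * jacobiCoeff α β (n + 1) m (i + 1)) x y
      = -(n + 1 + β) * binaryForm n (jacobiCoeff α β n) x y := by
    rw [← binaryForm_const_mul]
    refine binaryForm_congr (fun m i hmi => ?_) x y
    have pascal := Ring.choose_succ_succ ((n : ℝ) + α) i
    have absorb := Ring.choose_succ_right_eq ((n : ℝ) + α) i
    have shift := Ring.choose_mul_succ_eq ((n : ℝ) + β) m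
    rw [add_right_comm] at pascal shift
    have hsum : (m : ℝ) + i = n := by exact_mod_cast hmi
    simp only [jacobiCoeff]
    push_cast
    rw [show (n : ℝ) + 1 + (α - 1) = n + α by ring]
    linear_combination (-(n + 1 + α + β) * Ring.choose ((n : ℝ) + 1 + β) m) * pascal
      + Ring.choose ((n : ℝ) + α) i * shift + Ring.choose ((n : ℝ) + 1 + β) m * absorb
      - Ring.choose ((n : ℝ) + 1 + β) m
        * (Ring.choose ((n : ℝ) + α) i + Ring.choose ((n : ℝ) + α) (i + 1)) * hsum
  rw [binaryForm_succ_right, hshift]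
  simp only [jacobiCoeff, Ring.choose_zero_right]
  push_cast
  ring

theorem binaryForm_jacobiCoeff_contiguous (α β : ℝ) (n : ℕ) (x y : ℝ) :
    (2 * (n + 1) + α + β) * binaryForm (n + 1) (jacobiCoeff (α - 1) β (n + 1)) x y
      = (n + 1 + α + β) * binaryForm (n + 1) (jacobiCoeff α β (n + 1)) x y
        + (n + 1 + β) * (x - y) * binaryForm n (jacobiCoeff α β n) x y := by
  calc (2 * (n + 1) + α + β) * binaryForm (n + 1) (jacobiCoeff (α - 1) β (n + 1)) x y
      = binaryForm (n + 1) (fun m i => (n + 1 + α + β) * jacobiCoeff α β (n + 1) m i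
          + (m * jacobiCoeff (α - 1) β (n + 1) m i
            + ((2 * (n + 1) + α + β - m) * jacobiCoeff (α - 1) β (n + 1) m i
              - (n + 1 + α + β) * jacobiCoeff α β (n + 1) m i))) x y := by
        rw [← binaryForm_const_mul]
        congr
        funext m i
        ring
    _ = _ := by
        rw [binaryForm_add, binaryForm_add, binaryForm_const_mul,
          binaryForm_natCast_mul_jacobiCoeff, binaryForm_jacobiCoeff_sub]
        ring

theorem genJacobi_contiguous (α β : ℝ) (n : ℕ) (ζ : ℝ) :
    (2 * (n + 1) + α + β) * genJacobi (α - 1) β (n + 1) ζ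
      = (n + 1 + α + β) * genJacobi α β (n + 1) ζ - (n + 1 + β) * genJacobi α β n ζ := by
  simp only [genJacobi_eq_binaryForm]
  rw [binaryForm_jacobiCoeff_contiguous]
  ring

/-- `J_k^{-1,β} = ((k+β)/(2k+β)) (J_k^{0,β} - J_{k-1}^{0,β})` for `k ≥ 1`. -/
theorem genJacobi_m1_two_term (β : ℝ) (hβ : -1 < β) (k : ℕ) (hk : 1 ≤ k) (ζ : ℝ) :
    genJacobi (-1) β k ζ
      = ((k : ℝ) + β) / (2 * (k : ℝ) + β) *
          (genJacobi 0 β k ζ - genJacobi 0 β (k - 1) ζ) := by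
  obtain ⟨n, rfl⟩ : ∃ n, k = n + 1 := ⟨k - 1, by omega⟩
  have hrel := genJacobi_contiguous 0 β n ζ
  have hpos : 0 < 2 * ((n : ℝ) + 1) + β := by linarith [(n.cast_nonneg : (0 : ℝ) ≤ n)]
  rw [zero_sub, add_zero, add_zero] at hrel
  rw [Nat.add_sub_cancel, Nat.cast_add_one, div_mul_eq_mul_div, eq_div_iff hpos.ne']
  linear_combination hrel
end

section
/- For every real β > 0 and all integers k, j ≥ 0: ((2k+β)(2j+β) / ((k+β)(j+β))) · ∫_0^1 (d/dr)[J_k^{−1,β}(2r²−1)] · (d/dr)[J_j^{−1,β}(2r²−1)] · r^{2β+1} dr = δ_{k,j} · 2(2k+β) · (1 − δ_{k,0}), where δ denotes the Kronecker delta. -/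
open Real MeasureTheory

/-!
With `x = r²` one has `J_k^{-1,β}(2r² - 1) = P_k(x)` for an explicit polynomial `P_k`, whose
`r`-derivative is `2r P_k'(r²)`, so the integral is `2 ∫₀¹ x^{β+1} P_k'(x) P_j'(x) dx`: a
combination of the moments `∫₀¹ x^{β+a+1} P_k'(x) dx` with `a < j`. Since `P_k(1) = 0` for
`k ≥ 1`, integration by parts turns such a moment into `-(a+β+1) ∫₀¹ x^{β+a} P_k(x) dx`.
Expanding `P_k` in the basis `(x-1)^m x^{k-m}` makes every term a Beta integral, and the
Chu–Vandermonde identity sums them to a multiple of `a(a-1)⋯(a-k+2)`. Hence the moment vanishes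
for `a < k-1`, which is the orthogonality, and the moment at `a = k-1` together with the leading
coefficient of `P_k'` gives the diagonal value.
-/

open Polynomial

-- `∫₀¹ p(x) x^γ dx`, computed on coefficients (this is the integral when `-1 < γ`).
noncomputable def powerMoment (γ : ℝ) : ℝ[X] →ₗ[ℝ] ℝ :=
  lsum fun n => ((n : ℝ) + γ + 1)⁻¹ • LinearMap.id

theorem powerMoment_monomial (γ : ℝ) (n : ℕ) (c : ℝ) :
    powerMoment γ (monomial n c) = c / ((n : ℝ) + γ + 1) := by
  simp [powerMoment, div_eq_inv_mul]

theorem powerMoment_X_pow_mul (γ : ℝ) (a : ℕ) (p : ℝ[X]) :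
    powerMoment γ (X ^ a * p) = powerMoment (γ + a) p := by
  induction p using Polynomial.induction_on' with
  | add p q hp hq => rw [mul_add, map_add, map_add, hp, hq]
  | monomial n c =>
    rw [X_pow_mul_monomial, powerMoment_monomial, powerMoment_monomial]
    push_cast
    ring_nf

theorem powerMoment_X_mul_derivative {γ : ℝ} (hγ : -1 < γ) (p : ℝ[X]) :
    powerMoment γ (X * derivative p) = p.eval 1 - (γ + 1) * powerMoment γ p := by
  induction p using Polynomial.induction_on' with
  | add p q hp hq =>
    rw [derivative_add, mul_add, map_add, map_add, hp, hq, eval_add]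
    ring
  | monomial n c =>
    have hpos : (0 : ℝ) < n + γ + 1 := by linarith [n.cast_nonneg (α := ℝ)]
    rw [derivative_monomial, powerMoment_monomial, eval_monomial, one_pow, mul_one]
    rcases n with _ | n
    · simp only [Nat.cast_zero, mul_zero, map_zero] at hpos ⊢
      field_simp
      ring
    · rw [X_mul_monomial, Nat.add_sub_cancel, powerMoment_monomial]
      field_simp
      ring

theorem powerMoment_sub_one_pow {γ : ℝ} (hγ : -1 < γ) (m : ℕ) :
    powerMoment γ ((X - 1) ^ m) =
      (-1) ^ m * m.factorial / (ascPochhammer ℝ (m + 1)).eval (γ + 1) := by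
  induction m generalizing γ with
  | zero => rw [pow_zero, ← monomial_zero_one, powerMoment_monomial]; simp
  | succ m ih =>
    have hsplit : ((X : ℝ[X]) - 1) ^ (m + 1) = X ^ 1 * (X - 1) ^ m - (X - 1) ^ m := by ring
    rw [hsplit, map_sub, powerMoment_X_pow_mul, ih hγ, ih (by push_cast; linarith)]
    have hA := ascPochhammer_pos (m + 1) (γ + 1) (by linarith)
    have hB := ascPochhammer_pos (m + 1) (γ + 1 + 1) (by linarith)
    have hsucc := ascPochhammer_succ_eval (S := ℝ) (m + 1) (γ + 1)
    have hsucc' : (ascPochhammer ℝ (m + 1 + 1)).eval (γ + 1) =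
        (γ + 1) * (ascPochhammer ℝ (m + 1)).eval (γ + 1 + 1) := by
      rw [ascPochhammer_succ_left, eval_mul, eval_X, eval_comp, eval_add, eval_X, eval_one]
    rw [hsucc, Nat.factorial_succ]
    push_cast at hsucc ⊢
    have hγm : 0 < γ + 1 + (m + 1) := by linarith [m.cast_nonneg (α := ℝ)]
    field_simp
    linear_combination (-1) ^ m * (hsucc.symm.trans hsucc')

theorem intervalIntegrable_eval_sq_mul_rpow {γ : ℝ} (hγ : -1 < γ) (p : ℝ[X]) :
    IntervalIntegrable (fun r : ℝ => p.eval (r ^ 2) * r ^ (2 * γ + 1)) volume 0 1 :=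
  (intervalIntegral.intervalIntegrable_rpow' (by linarith)).continuousOn_mul
    (p.continuous.comp (continuous_pow 2)).continuousOn

theorem integral_eval_sq_mul_rpow {γ : ℝ} (hγ : -1 < γ) (p : ℝ[X]) :
    ∫ r in (0 : ℝ)..1, p.eval (r ^ 2) * r ^ (2 * γ + 1) = powerMoment γ p / 2 := by
  induction p using Polynomial.induction_on' with
  | add p q hp hq =>
    simp only [eval_add, add_mul]
    rw [intervalIntegral.integral_add (intervalIntegrable_eval_sq_mul_rpow hγ p)
      (intervalIntegrable_eval_sq_mul_rpow hγ q), hp, hq, map_add, add_div]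
  | monomial n c =>
    have hexp : -1 < 2 * (n : ℝ) + 2 * γ + 1 := by linarith [n.cast_nonneg (α := ℝ)]
    have hpow : ∀ r ∈ Set.Ioc (0 : ℝ) 1,
        (monomial n c).eval (r ^ 2) * r ^ (2 * γ + 1) = c * r ^ (2 * (n : ℝ) + 2 * γ + 1) := by
      intro r hr
      rw [eval_monomial, ← pow_mul, mul_assoc, ← Real.rpow_natCast, ← Real.rpow_add hr.1]
      push_cast
      ring_nf
    rw [intervalIntegral.integral_congr_ae (Filter.Eventually.of_forall fun r hr =>
        hpow r (by simpa using hr)), intervalIntegral.integral_const_mul,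
      integral_rpow (Or.inl hexp), Real.one_rpow, Real.zero_rpow (by linarith),
      powerMoment_monomial]
    have hpos : (n : ℝ) + γ + 1 ≠ 0 := by linarith [n.cast_nonneg (α := ℝ)]
    rw [show 2 * (n : ℝ) + 2 * γ + 1 + 1 = 2 * (n + γ + 1) by ring]
    field_simp
    ring

theorem descPochhammer_smeval_int_eq_eval {R : Type*} [CommRing R] (n : ℕ) (r : R) :
    (descPochhammer ℤ n).smeval r = (descPochhammer R n).eval r := by
  rw [← aeval_eq_smeval, aeval_def, ← eval_map, descPochhammer_map]

theorem descPochhammer_eval_add {R : Type*} [CommRing R] (u v : R) (N : ℕ) :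
    (descPochhammer R N).eval (u + v) = ∑ i ∈ Finset.range (N + 1),
      (N.choose i : R) * (descPochhammer R i).eval u * (descPochhammer R (N - i)).eval v := by
  simp only [← descPochhammer_smeval_int_eq_eval, mul_assoc]
  rw [Ring.descPochhammer_smeval_add N (Commute.all u v),
    Finset.Nat.sum_antidiagonal_eq_sum_range_succ_mk]

theorem ascPochhammer_eval_add {R : Type*} [CommRing R] (u v : R) (N : ℕ) :
    (ascPochhammer R N).eval (u + v) = ∑ i ∈ Finset.range (N + 1),
      (N.choose i : R) * (ascPochhammer R i).eval u * (ascPochhammer R (N - i)).eval v := by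
  rw [← neg_neg (u + v), ascPochhammer_eval_neg_eq_descPochhammer, neg_add,
    descPochhammer_eval_add, Finset.mul_sum]
  refine Finset.sum_congr rfl fun i hi => ?_
  rw [← neg_neg u, ← neg_neg v, ascPochhammer_eval_neg_eq_descPochhammer,
    ascPochhammer_eval_neg_eq_descPochhammer, neg_neg, neg_neg,
    ← Nat.add_sub_of_le (Nat.lt_succ_iff.mp (Finset.mem_range.mp hi)), pow_add,
    Nat.add_sub_cancel_left]
  ring

theorem ascPochhammer_add_eval {R : Type*} [CommSemiring R] (x : R) (a b : ℕ) :
    (ascPochhammer R (a + b)).eval x =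
      (ascPochhammer R a).eval x * (ascPochhammer R b).eval (x + a) := by
  rw [← ascPochhammer_mul, eval_mul, eval_comp, eval_add, eval_X, eval_natCast]

theorem genBinom_mul_factorial (x : ℝ) (k : ℕ) :
    genBinom x k * k.factorial = (descPochhammer ℝ k).eval x :=
  div_mul_cancel₀ _ (by positivity)

theorem genBinom_natCast (a b : ℕ) : genBinom a b = a.choose b :=
  (Nat.cast_choose_eq_descPochhammer_div (K := ℝ) a b).symm

theorem genBinom_add (x y : ℝ) (n : ℕ) :
    genBinom (x + y) n = ∑ m ∈ Finset.range (n + 1), genBinom x (n - m) * genBinom y m := by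
  have hchoose : ∀ z k, genBinom z k = Ring.choose z k := fun z k => by
    rw [Ring.choose_eq_smul, descPochhammer_smeval_int_eq_eval, smul_eq_mul, genBinom,
      div_eq_inv_mul]
  simp only [hchoose]
  rw [add_comm, Ring.add_choose_eq n (Commute.all y x),
    Finset.Nat.sum_antidiagonal_eq_sum_range_succ_mk]
  exact Finset.sum_congr rfl fun m _ => mul_comm _ _

-- `J_n^{α,β}(2x - 1)` as a polynomial in `x`.
noncomputable def shiftedJacobi (α β : ℝ) (n : ℕ) : ℝ[X] :=
  ∑ m ∈ Finset.range (n + 1),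
    C (genBinom ((n : ℝ) + α) (n - m) * genBinom ((n : ℝ) + β) m) * (X - 1) ^ m * X ^ (n - m)

theorem genJacobi_eq_eval_shiftedJacobi (α β : ℝ) (n : ℕ) (ζ : ℝ) :
    genJacobi α β n ζ = (shiftedJacobi α β n).eval ((ζ + 1) / 2) := by
  simp only [genJacobi, shiftedJacobi, eval_finsetSum, eval_mul, eval_C, eval_pow, eval_sub,
    eval_X, eval_one]
  exact Finset.sum_congr rfl fun m _ => by ring

theorem hasDerivAt_genJacobi_two_mul_sq_sub_one (α β : ℝ) (n : ℕ) (r : ℝ) :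
    HasDerivAt (fun s => genJacobi α β n (2 * s ^ 2 - 1))
      (2 * r * (derivative (shiftedJacobi α β n)).eval (r ^ 2)) r := by
  have hcomp : (fun s : ℝ => genJacobi α β n (2 * s ^ 2 - 1)) =
      fun s => (shiftedJacobi α β n).eval (s ^ 2) := by
    funext s
    rw [genJacobi_eq_eval_shiftedJacobi]
    congr 1
    ring
  rw [hcomp]
  refine (((shiftedJacobi α β n).hasDerivAt (r ^ 2)).comp r (hasDerivAt_pow 2 r)).congr_deriv ?_
  push_cast
  ring

theorem natDegree_shiftedJacobi_le (α β : ℝ) (n : ℕ) : (shiftedJacobi α β n).natDegree ≤ n := by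
  refine natDegree_sum_le_of_forall_le _ _ fun m hm => ?_
  have hmn := Nat.lt_succ_iff.mp (Finset.mem_range.mp hm)
  compute_degree
  omega

theorem natDegree_derivative_shiftedJacobi_le (α β : ℝ) (n : ℕ) :
    (derivative (shiftedJacobi α β (n + 1))).natDegree ≤ n :=
  (natDegree_derivative_le _).trans (by have := natDegree_shiftedJacobi_le α β (n + 1); omega)

theorem derivative_shiftedJacobi_zero (α β : ℝ) : derivative (shiftedJacobi α β 0) = 0 := by
  simp [shiftedJacobi]

theorem coeff_shiftedJacobi_self (α β : ℝ) (n : ℕ) :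
    (shiftedJacobi α β n).coeff n = genBinom (2 * n + α + β) n := by
  rw [show 2 * (n : ℝ) + α + β = (n + α) + (n + β) by ring, genBinom_add, shiftedJacobi,
    finsetSum_coeff]
  refine Finset.sum_congr rfl fun m hm => ?_
  have hmn := Nat.lt_succ_iff.mp (Finset.mem_range.mp hm)
  have hcoeff := coeff_mul_X_pow ((X - 1) ^ m : ℝ[X]) (n - m) m
  rw [Nat.add_sub_cancel' hmn] at hcoeff
  rw [mul_assoc, coeff_C_mul, hcoeff, sub_eq_add_neg, ← C_1, ← C_neg, coeff_X_add_C_pow]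
  simp

theorem eval_one_shiftedJacobi (α β : ℝ) (n : ℕ) :
    (shiftedJacobi α β n).eval 1 = genBinom (n + α) n := by
  simp [shiftedJacobi, eval_finsetSum, Finset.sum_range_succ', genBinom]

theorem powerMoment_shiftedJacobi {γ : ℝ} (hγ : -1 < γ) (α β : ℝ) (n : ℕ) :
    powerMoment γ (shiftedJacobi α β n) = ∑ m ∈ Finset.range (n + 1),
      genBinom ((n : ℝ) + α) (n - m) * genBinom ((n : ℝ) + β) m *
        ((-1) ^ m * m.factorial / (ascPochhammer ℝ (m + 1)).eval (γ + (n - m : ℕ) + 1)) := by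
  rw [shiftedJacobi, map_sum]
  refine Finset.sum_congr rfl fun m _ => ?_
  rw [mul_assoc, mul_comm ((X - 1) ^ m), C_mul', map_smul, powerMoment_X_pow_mul,
    powerMoment_sub_one_pow (by linarith [(n - m).cast_nonneg (α := ℝ)]), smul_eq_mul]

theorem powerMoment_shiftedJacobi_neg_one {γ : ℝ} (hγ : -1 < γ) (β : ℝ) (n : ℕ) :
    powerMoment γ (shiftedJacobi (-1) β (n + 1)) =
      -((n + 1 + β) * (descPochhammer ℝ n).eval (γ - β)) /
        (ascPochhammer ℝ (n + 2)).eval (γ + 1) := by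
  have hA : 0 < (ascPochhammer ℝ (n + 2)).eval (γ + 1) := ascPochhammer_pos _ _ (by linarith)
  -- Clearing the denominators `(γ + n - i + 1)_{i+2}` against `(γ + 1)_{n+2}` leaves the
  -- rising Chu–Vandermonde convolution.
  have hterm : ∀ i ∈ Finset.range (n + 1),
      genBinom (((n + 1 : ℕ) : ℝ) + -1) (n + 1 - (i + 1)) *
          genBinom (((n + 1 : ℕ) : ℝ) + β) (i + 1) *
        ((-1) ^ (i + 1) * (i + 1).factorial /
          (ascPochhammer ℝ (i + 1 + 1)).eval (γ + (n + 1 - (i + 1) : ℕ) + 1)) =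
      -(n + 1 + β) / (ascPochhammer ℝ (n + 2)).eval (γ + 1) *
        (n.choose i * (ascPochhammer ℝ i).eval (-(n + β)) *
          (ascPochhammer ℝ (n - i)).eval (γ + 1)) := by
    intro i hi
    have hin := Nat.lt_succ_iff.mp (Finset.mem_range.mp hi)
    have hbinom : genBinom (((n + 1 : ℕ) : ℝ) + -1) (n + 1 - (i + 1)) = n.choose i := by
      rw [Nat.add_sub_add_right, Nat.cast_succ, add_neg_cancel_right, genBinom_natCast,
        Nat.choose_symm hin]
    have hrising :
        genBinom (((n + 1 : ℕ) : ℝ) + β) (i + 1) * ((-1) ^ (i + 1) * (i + 1).factorial) =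
          -(n + 1 + β) * (ascPochhammer ℝ i).eval (-(n + β)) := by
      rw [mul_left_comm, genBinom_mul_factorial, ← ascPochhammer_eval_neg_eq_descPochhammer,
        ascPochhammer_succ_left, eval_mul, eval_X, eval_comp, eval_add, eval_X, eval_one]
      push_cast
      ring_nf
    have hsplit : (ascPochhammer ℝ (n + 2)).eval (γ + 1) =
        (ascPochhammer ℝ (n - i)).eval (γ + 1) *
          (ascPochhammer ℝ (i + 1 + 1)).eval (γ + (n + 1 - (i + 1) : ℕ) + 1) := by
      rw [show n + 2 = (n - i) + (i + 1 + 1) by omega, ascPochhammer_add_eval,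
        Nat.add_sub_add_right]
      ring_nf
    have hB : 0 < (ascPochhammer ℝ (i + 1 + 1)).eval (γ + (n + 1 - (i + 1) : ℕ) + 1) :=
      ascPochhammer_pos _ _ (by linarith [(n + 1 - (i + 1)).cast_nonneg (α := ℝ)])
    have hC : 0 < (ascPochhammer ℝ (n - i)).eval (γ + 1) := ascPochhammer_pos _ _ (by linarith)
    rw [hbinom, hsplit]
    field_simp
    linear_combination (n.choose i : ℝ) * hrising
  rw [powerMoment_shiftedJacobi hγ, Finset.sum_range_succ', Finset.sum_congr rfl hterm,
    ← Finset.mul_sum, ← ascPochhammer_eval_add, Nat.cast_succ, add_neg_cancel_right,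
    genBinom_natCast, Nat.choose_eq_zero_of_lt (by omega), descPochhammer_eval_eq_ascPochhammer]
  field_simp
  ring_nf

theorem powerMoment_X_pow_succ_mul_derivative_shiftedJacobi {β : ℝ} (hβ : -1 < β) (n a : ℕ) :
    powerMoment β (X ^ (a + 1) * derivative (shiftedJacobi (-1) β (n + 1))) =
      (n + 1 + β) * (descPochhammer ℝ n).eval (a : ℝ) /
        (ascPochhammer ℝ (n + 1)).eval (a + β + 2) := by
  have hγ : -1 < β + a := by linarith [a.cast_nonneg (α := ℝ)]
  have hsucc : (ascPochhammer ℝ (n + 2)).eval (β + a + 1) =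
      (β + a + 1) * (ascPochhammer ℝ (n + 1)).eval (a + β + 2) := by
    rw [ascPochhammer_succ_left, eval_mul, eval_X, eval_comp, eval_add, eval_X, eval_one]
    ring_nf
  have hpos : 0 < (ascPochhammer ℝ (n + 1)).eval (a + β + 2) :=
    ascPochhammer_pos _ _ (by linarith)
  rw [pow_succ, mul_assoc, powerMoment_X_pow_mul, powerMoment_X_mul_derivative hγ,
    eval_one_shiftedJacobi, Nat.cast_succ, add_neg_cancel_right, genBinom_natCast,
    Nat.choose_eq_zero_of_lt (by omega), powerMoment_shiftedJacobi_neg_one hγ, hsucc,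
    add_sub_cancel_left]
  have : β + a + 1 ≠ 0 := by linarith
  field_simp
  push_cast
  ring

theorem powerMoment_X_mul_derivative_shiftedJacobi_mul {β : ℝ} (hβ : -1 < β) (n : ℕ)
    (q : ℝ[X]) (hq : q.natDegree ≤ n) :
    powerMoment β (X * derivative (shiftedJacobi (-1) β (n + 1)) * q) =
      q.coeff n *
        ((n + 1 + β) * n.factorial / (ascPochhammer ℝ (n + 1)).eval (n + β + 2)) := by
  conv_lhs => rw [as_sum_range' q (n + 1) (Nat.lt_succ_of_le hq)]
  have hterm : ∀ a, powerMoment β (X * derivative (shiftedJacobi (-1) β (n + 1)) *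
      monomial a (q.coeff a)) = q.coeff a * ((n + 1 + β) * (descPochhammer ℝ n).eval (a : ℝ) /
        (ascPochhammer ℝ (n + 1)).eval (a + β + 2)) := fun a => by
    rw [← powerMoment_X_pow_succ_mul_derivative_shiftedJacobi hβ, ← C_mul_X_pow_eq_monomial,
      show X * derivative (shiftedJacobi (-1) β (n + 1)) * (C (q.coeff a) * X ^ a) =
        C (q.coeff a) * (X ^ (a + 1) * derivative (shiftedJacobi (-1) β (n + 1))) by ring,
      C_mul', map_smul, smul_eq_mul]
  simp only [Finset.mul_sum, map_sum, hterm]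
  rw [Finset.sum_range_succ, Finset.sum_eq_zero fun a ha => by
      rw [descPochhammer_eval_coe_nat_of_lt (Finset.mem_range.mp ha)]; simp,
    descPochhammer_eval_eq_descFactorial, Nat.descFactorial_self, zero_add]

theorem powerMoment_X_mul_derivative_shiftedJacobi_mul_eq_zero {β : ℝ} (hβ : -1 < β) (n : ℕ)
    {q : ℝ[X]} (hq : q.natDegree < n) :
    powerMoment β (X * derivative (shiftedJacobi (-1) β (n + 1)) * q) = 0 := by
  rw [powerMoment_X_mul_derivative_shiftedJacobi_mul hβ n q hq.le,
    coeff_eq_zero_of_natDegree_lt hq, zero_mul]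

theorem powerMoment_X_mul_derivative_shiftedJacobi_sq {β : ℝ} (hβ : -1 < β) (n : ℕ) :
    powerMoment β (X * derivative (shiftedJacobi (-1) β (n + 1)) *
      derivative (shiftedJacobi (-1) β (n + 1))) = (n + 1 + β) ^ 2 / (2 * (n + 1) + β) := by
  rw [powerMoment_X_mul_derivative_shiftedJacobi_mul hβ n _
    (natDegree_derivative_shiftedJacobi_le _ _ n), coeff_derivative, coeff_shiftedJacobi_self]
  have hrising : genBinom (2 * ((n + 1 : ℕ) : ℝ) + -1 + β) (n + 1) * (n + 1).factorial =
      (ascPochhammer ℝ (n + 1)).eval (n + 1 + β) := by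
    rw [genBinom_mul_factorial, descPochhammer_eval_eq_ascPochhammer]
    push_cast
    ring_nf
  have hsucc : (n + 1 + β) * (ascPochhammer ℝ (n + 1)).eval (n + β + 2) =
      (ascPochhammer ℝ (n + 1)).eval (n + 1 + β) * (2 * (n + 1) + β) := by
    have e1 := ascPochhammer_succ_eval (S := ℝ) (n + 1) (n + 1 + β)
    have e2 : (ascPochhammer ℝ (n + 1 + 1)).eval (n + 1 + β) =
        (n + 1 + β) * (ascPochhammer ℝ (n + 1)).eval (n + β + 2) := by
      rw [ascPochhammer_succ_left, eval_mul, eval_X, eval_comp, eval_add, eval_X, eval_one]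
      ring_nf
    push_cast at e1
    linear_combination e2.symm.trans e1
  have hA : 0 < (ascPochhammer ℝ (n + 1)).eval (n + β + 2) :=
    ascPochhammer_pos _ _ (by linarith)
  have hβn : 0 < 2 * ((n : ℝ) + 1) + β := by linarith [n.cast_nonneg (α := ℝ)]
  rw [Nat.factorial_succ] at hrising
  push_cast at hrising ⊢
  field_simp
  linear_combination
    ((n : ℝ) + 1 + β) * (2 * ((n : ℝ) + 1) + β) * hrising - ((n : ℝ) + 1 + β) * hsucc

theorem integral_deriv_genJacobi_mul_deriv_genJacobi {γ : ℝ} (hγ : -1 < γ) (α β : ℝ)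
    (k j : ℕ) :
    ∫ r in (0 : ℝ)..1, deriv (fun s => genJacobi α β k (2 * s ^ 2 - 1)) r *
        deriv (fun s => genJacobi α β j (2 * s ^ 2 - 1)) r * r ^ (2 * γ + 1) =
      2 * powerMoment γ
        (X * derivative (shiftedJacobi α β k) * derivative (shiftedJacobi α β j)) := by
  have hintegrand : ∀ r : ℝ, deriv (fun s => genJacobi α β k (2 * s ^ 2 - 1)) r *
      deriv (fun s => genJacobi α β j (2 * s ^ 2 - 1)) r =
      (C 4 * (X * derivative (shiftedJacobi α β k) * derivative (shiftedJacobi α β j))).eval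
        (r ^ 2) := by
    intro r
    rw [(hasDerivAt_genJacobi_two_mul_sq_sub_one α β k r).deriv,
      (hasDerivAt_genJacobi_two_mul_sq_sub_one α β j r).deriv]
    simp only [eval_mul, eval_C, eval_X]
    ring
  simp only [hintegrand]
  rw [integral_eval_sq_mul_rpow hγ, C_mul', map_smul, smul_eq_mul]
  ring

/-- Stiffness-matrix orthogonality of the radial basis `J_k^{-1,β}(2r²-1)`. -/
theorem radial_stiffness_II (β : ℝ) (hβ : 0 < β) (k j : ℕ) :
    ((2 * (k : ℝ) + β) * (2 * (j : ℝ) + β) / (((k : ℝ) + β) * ((j : ℝ) + β))) *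
      ∫ r in (0:ℝ)..1,
        deriv (fun s => genJacobi (-1) β k (2 * s ^ 2 - 1)) r *
          deriv (fun s => genJacobi (-1) β j (2 * s ^ 2 - 1)) r * r ^ (2 * β + 1)
    = (if k = j then 1 else 0) * (2 * (2 * (k : ℝ) + β)) *
        (1 - if k = 0 then 1 else 0) := by
  have hβ' : -1 < β := by linarith
  rw [integral_deriv_genJacobi_mul_deriv_genJacobi hβ']
  rcases k with _ | k
  · simp [derivative_shiftedJacobi_zero]
  rcases j with _ | j
  · simp [derivative_shiftedJacobi_zero]
  rcases lt_trichotomy j k with hjk | rfl | hkj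
  · rw [powerMoment_X_mul_derivative_shiftedJacobi_mul_eq_zero hβ' k
      ((natDegree_derivative_shiftedJacobi_le _ _ j).trans_lt hjk)]
    simp [hjk.ne']
  · rw [powerMoment_X_mul_derivative_shiftedJacobi_sq hβ', if_pos rfl, if_neg j.succ_ne_zero]
    have : (j : ℝ) + 1 + β ≠ 0 := by positivity
    push_cast
    field_simp
    ring
  · rw [mul_right_comm, powerMoment_X_mul_derivative_shiftedJacobi_mul_eq_zero hβ' j
      ((natDegree_derivative_shiftedJacobi_le _ _ k).trans_lt hkj)]
    simp [hkj.ne]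
end
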